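/- Let w : ℝ² → ℝ be a bounded differentiable function whose gradient is bounded, with ‖w‖∞ = sup_{z∈ℝ²} |w(z)| and ‖∇w‖∞ = sup_{z∈ℝ²} ‖∇w(z)‖₂. Then for any points u = (a,b) and v = (c,d) in ℝ² with a ≤ b and c ≤ d, and any constant L ≥ max{b−a, d−c}, it holds that ∫_ℝ |w(u)·χ_{[a,b)}(t) − w(v)·χ_{[c,d)}(t)| dt ≤ (‖w‖∞ + L·‖∇w‖∞)·‖u−v‖₁, where ‖u−v‖₁ = |a−c| + |b−d|. -/

import Mathlib

/-!
Split `w(u)·χ_{[a,b)} - w(v)·χ_{[c,d)}` as `(w(u) - w(v))·χ_{[a,b)} + w(v)·(χ_{[a,b)} - χ_{[c,d)})`.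
By the mean value inequality the first term integrates to at most `‖∇w‖∞ · ‖u - v‖₂ · (b - a)`,
and `‖u - v‖₂ ≤ ‖u - v‖₁`. The two indicators differ only on
`[min a c, max a c) ∪ [min b d, max b d)`, of measure `|a - c| + |b - d|`, so the second term
integrates to at most `‖w‖∞ · ‖u - v‖₁`.
-/

open MeasureTheory

/-- The indicator function of the half-open interval `[a, b)`. -/
noncomputable def chiIco (a b t : ℝ) : ℝ :=
  Set.indicator (Set.Ico a b) (fun _ => (1 : ℝ)) t

/-- The point `(a, b)` viewed as an element of the Euclidean plane `ℝ²`. -/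
noncomputable def pt (a b : ℝ) : EuclideanSpace ℝ (Fin 2) :=
  (WithLp.equiv 2 (Fin 2 → ℝ)).symm ![a, b]

lemma chiIco_nonneg (a b t : ℝ) : 0 ≤ chiIco a b t :=
  Set.indicator_nonneg (fun _ _ => zero_le_one) t

lemma integrable_chiIco (a b : ℝ) : Integrable (chiIco a b) :=
  (integrable_indicator_iff measurableSet_Ico).2 (integrableOn_const measure_Ico_lt_top.ne)

lemma integral_chiIco {a b : ℝ} (hab : a ≤ b) : ∫ t, chiIco a b t = b - a := by
  unfold chiIco
  rw [integral_indicator measurableSet_Ico, setIntegral_const, measureReal_def,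
    Real.volume_Ico, ENNReal.toReal_ofReal (sub_nonneg.2 hab), smul_eq_mul, mul_one]

lemma integral_chiIco_min_max (a c : ℝ) : ∫ t, chiIco (min a c) (max a c) t = |a - c| := by
  rw [integral_chiIco min_le_max, max_sub_min_eq_abs']

lemma abs_chiIco_sub_le (a b c d t : ℝ) :
    |chiIco a b t - chiIco c d t| ≤
      chiIco (min a c) (max a c) t + chiIco (min b d) (max b d) t := by
  simp only [chiIco, Set.indicator, Set.mem_Ico]
  split_ifs <;> simp_all

lemma integral_abs_mul_chiIco_sub_le (p q : ℝ) {a b : ℝ} (hab : a ≤ b) (c d : ℝ) :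
    ∫ t, |p * chiIco a b t - q * chiIco c d t|
      ≤ |p - q| * (b - a) + |q| * (|a - c| + |b - d|) := by
  have hsplit : ∀ t, |p * chiIco a b t - q * chiIco c d t| ≤
      |p - q| * chiIco a b t +
        |q| * (chiIco (min a c) (max a c) t + chiIco (min b d) (max b d) t) := fun t =>
    calc |p * chiIco a b t - q * chiIco c d t|
        = |(p - q) * chiIco a b t + q * (chiIco a b t - chiIco c d t)| := by congr 1; ring
      _ ≤ |p - q| * chiIco a b t + |q| * |chiIco a b t - chiIco c d t| :=
        (abs_add_le _ _).trans_eq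
          (by rw [abs_mul, abs_mul, abs_of_nonneg (chiIco_nonneg a b t)])
      _ ≤ _ := by gcongr; exact abs_chiIco_sub_le a b c d t
  have hint_ab : Integrable fun t => |p - q| * chiIco a b t :=
    (integrable_chiIco a b).const_mul _
  have hint_ends : Integrable fun t =>
      |q| * (chiIco (min a c) (max a c) t + chiIco (min b d) (max b d) t) :=
    ((integrable_chiIco _ _).add (integrable_chiIco _ _)).const_mul _
  calc ∫ t, |p * chiIco a b t - q * chiIco c d t|
      ≤ ∫ t, (|p - q| * chiIco a b t +
          |q| * (chiIco (min a c) (max a c) t + chiIco (min b d) (max b d) t)) :=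
        integral_mono (((integrable_chiIco a b).const_mul p).sub
          ((integrable_chiIco c d).const_mul q)).abs (hint_ab.add hint_ends) hsplit
    _ = |p - q| * (b - a) + |q| * (|a - c| + |b - d|) := by
      rw [integral_add hint_ab hint_ends, integral_const_mul, integral_const_mul,
        integral_add (integrable_chiIco _ _) (integrable_chiIco _ _),
        integral_chiIco hab, integral_chiIco_min_max, integral_chiIco_min_max]

lemma pt_sub_pt (a b c d : ℝ) : pt a b - pt c d = pt (a - c) (b - d) := by
  ext i; fin_cases i <;> rfl

lemma pt_eq_single_add_single (x y : ℝ) :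
    pt x y = EuclideanSpace.single 0 x + EuclideanSpace.single 1 y := by
  ext i; fin_cases i <;> simp [pt]

lemma norm_pt_le (x y : ℝ) : ‖pt x y‖ ≤ |x| + |y| := by
  rw [pt_eq_single_add_single]
  exact (norm_add_le _ _).trans_eq (by simp)

lemma abs_sub_le_of_norm_gradient_le {E : Type*} [NormedAddCommGroup E] [InnerProductSpace ℝ E]
    [CompleteSpace E] {f : E → ℝ} {C : ℝ} (hf : Differentiable ℝ f)
    (hC : ∀ z, ‖gradient f z‖ ≤ C) (x y : E) : |f x - f y| ≤ C * ‖x - y‖ := by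
  have hfderiv : ∀ z, ‖fderiv ℝ f z‖ ≤ C := fun z => by
    simpa only [gradient, LinearIsometryEquiv.norm_map] using hC z
  simpa only [Real.norm_eq_abs] using convex_univ.norm_image_sub_le_of_norm_fderiv_le
    (fun z _ => hf z) (fun z _ => hfderiv z) (Set.mem_univ y) (Set.mem_univ x)

theorem betti_term_stability_general
    (w : EuclideanSpace ℝ (Fin 2) → ℝ) (W Wg : ℝ)
    (hdiff : Differentiable ℝ w)
    (hW : ∀ z, |w z| ≤ W)
    (hWg : ∀ z, ‖gradient w z‖ ≤ Wg)
    (a b c d L : ℝ) (hab : a ≤ b)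
    (hL : max (b - a) (d - c) ≤ L) :
    ∫ t : ℝ, |w (pt a b) * chiIco a b t - w (pt c d) * chiIco c d t|
      ≤ (W + L * Wg) * (|a - c| + |b - d|) := by
  have hWg0 : 0 ≤ Wg := (norm_nonneg _).trans (hWg 0)
  have hdist : 0 ≤ |a - c| + |b - d| := by positivity
  have hlip : |w (pt a b) - w (pt c d)| ≤ Wg * (|a - c| + |b - d|) := by
    refine (abs_sub_le_of_norm_gradient_le hdiff hWg _ _).trans ?_
    rw [pt_sub_pt]
    exact mul_le_mul_of_nonneg_left (norm_pt_le _ _) hWg0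
  have hba : b - a ≤ L := (le_max_left _ _).trans hL
  calc _ ≤ |w (pt a b) - w (pt c d)| * (b - a) + |w (pt c d)| * (|a - c| + |b - d|) :=
        integral_abs_mul_chiIco_sub_le _ _ hab c d
    _ ≤ Wg * (|a - c| + |b - d|) * L + W * (|a - c| + |b - d|) :=
        add_le_add (mul_le_mul hlip hba (sub_nonneg.2 hab) (mul_nonneg hWg0 hdist))
          (mul_le_mul_of_nonneg_right (hW _) hdist)
    _ = (W + L * Wg) * (|a - c| + |b - d|) := by ring

/-- **Lemma 1 (general form).** If `w : ℝ² → ℝ` is a bounded differentiable function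
whose gradient is bounded (`W` bounds `|w|`, `Wg` bounds the Euclidean norm of `∇w`),
then for points `u = (a,b)`, `v = (c,d)` with `a ≤ b`, `c ≤ d` and any
`L ≥ max (b-a) (d-c)`,
`∫ℝ |w(u)·χ_{[a,b)}(t) − w(v)·χ_{[c,d)}(t)| dt ≤ (W + L·Wg)·(|a−c| + |b−d|)`. -/
theorem betti_term_stability
    (w : EuclideanSpace ℝ (Fin 2) → ℝ) (W Wg : ℝ)
    (hdiff : Differentiable ℝ w)
    (hW : ∀ z, |w z| ≤ W)
    (hWg : ∀ z, ‖gradient w z‖ ≤ Wg)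
    (a b c d L : ℝ) (hab : a ≤ b) (hcd : c ≤ d)
    (hL : max (b - a) (d - c) ≤ L) :
    ∫ t : ℝ, |w (pt a b) * chiIco a b t - w (pt c d) * chiIco c d t|
      ≤ (W + L * Wg) * (|a - c| + |b - d|) :=
  betti_term_stability_general w W Wg hdiff hW hWg a b c d L hab hL
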